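/- Let ε > 0 and let λ : (0,∞) → (0,∞) satisfy lim_{t→∞} λ(t) = 0 and lim_{t→∞} (t + ln(λ(t)ε²)) = ∞. Set σ_t := 1/cosh(ε√(2λ(t))). Then for every ρ ∈ ℝ, setting r(t) := −ln(λ(t)ε²) − ρ, one has lim_{t→∞} σ_t (e^{−r(t)} − e^{−t}) / (1 − σ_t(1 − e^{−r(t)})) = 1/(e^{−ρ} + 1). -/

import Mathlib

/-!
Write `δ = λ ε²`, so that `e^{-r} = δ e^ρ` and `σ = sech √(2δ)`. Since
`1 - sech x = 2 sinh²(x/2) / cosh x ~ x²/2`, we get `1 - σ ~ δ`, while `e^{-t} = o(δ)` because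
`t + ln δ → ∞`. Dividing numerator and denominator by `δ`, the ratio tends to
`e^ρ / (1 + e^ρ) = 1 / (e^{-ρ} + 1)`.
-/

open Filter Real Topology

lemma Real.tendsto_sinh_div_self : Tendsto (fun x => sinh x / x) (𝓝[≠] 0) (𝓝 1) := by
  have h := hasDerivAt_iff_tendsto_slope.mp (hasDerivAt_sinh 0)
  rw [cosh_zero] at h
  refine h.congr' ?_
  filter_upwards with y
  simp [slope_def_field]

lemma Real.cosh_sub_one_eq (x : ℝ) : cosh x - 1 = 2 * sinh (x / 2) ^ 2 := by
  conv_lhs => rw [← mul_div_cancel₀ x two_ne_zero, cosh_two_mul, cosh_sq]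
  ring

lemma Real.tendsto_one_sub_inv_cosh_div_sq :
    Tendsto (fun x => (1 - (cosh x)⁻¹) / (x ^ 2 / 2)) (𝓝[≠] 0) (𝓝 1) := by
  have hhalf : Tendsto (fun x : ℝ => x / 2) (𝓝[≠] 0) (𝓝[≠] 0) :=
    tendsto_nhdsWithin_of_tendsto_nhds_of_eventually_within _
      ((continuous_id.div_const 2).tendsto' 0 0 (zero_div 2) |>.mono_left nhdsWithin_le_nhds)
      (eventually_nhdsWithin_of_forall fun x hx => div_ne_zero hx two_ne_zero)
  have hcosh : Tendsto cosh (𝓝[≠] 0) (𝓝 1) :=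
    cosh_zero ▸ continuous_cosh.continuousAt.tendsto.mono_left nhdsWithin_le_nhds
  have hlim := ((tendsto_sinh_div_self.comp hhalf).pow 2).mul (hcosh.inv₀ one_ne_zero)
  rw [one_pow, inv_one, one_mul] at hlim
  refine hlim.congr' ?_
  filter_upwards [self_mem_nhdsWithin] with x (hx : x ≠ 0)
  have hc : cosh x ≠ 0 := (cosh_pos x).ne'
  have hsub : 1 - (cosh x)⁻¹ = (cosh x - 1) / cosh x := by field_simp
  rw [Function.comp_apply, hsub, cosh_sub_one_eq]
  field_simp

lemma Real.tendsto_one_sub_inv_cosh_sqrt_two_mul_div :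
    Tendsto (fun d => (1 - (cosh √(2 * d))⁻¹) / d) (𝓝[>] 0) (𝓝 1) := by
  have hsqrt : Tendsto (fun d : ℝ => √(2 * d)) (𝓝[>] 0) (𝓝[≠] 0) := by
    refine tendsto_nhdsWithin_of_tendsto_nhds_of_eventually_within _ ?_ ?_
    · have hcont : Continuous fun d : ℝ => √(2 * d) := by fun_prop
      simpa using (hcont.tendsto 0).mono_left nhdsWithin_le_nhds
    · filter_upwards [self_mem_nhdsWithin] with d (hd : 0 < d)
      exact (sqrt_pos.mpr (by positivity)).ne'
  refine (tendsto_one_sub_inv_cosh_div_sq.comp hsqrt).congr' ?_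
  filter_upwards [self_mem_nhdsWithin] with d (hd : 0 < d)
  rw [Function.comp_apply, sq_sqrt (by positivity)]
  ring_nf

lemma tendsto_mul_sub_div_one_sub_mul {α : Type*} {l : Filter α} {δ η σ : α → ℝ} {a : ℝ}
    (ha : 1 + a ≠ 0) (hδ : Tendsto δ l (𝓝[≠] 0))
    (hσ : Tendsto (fun x => (1 - σ x) / δ x) l (𝓝 1))
    (hη : Tendsto (fun x => η x / δ x) l (𝓝 0)) :
    Tendsto (fun x => σ x * (δ x * a - η x) / (1 - σ x * (1 - δ x * a))) l
      (𝓝 (a / (1 + a))) := by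
  have hδne : ∀ᶠ x in l, δ x ≠ 0 := hδ self_mem_nhdsWithin
  have hσ1 : Tendsto σ l (𝓝 1) := by
    have hlim := tendsto_const_nhds (x := (1 : ℝ)) |>.sub
      ((tendsto_nhds_of_tendsto_nhdsWithin hδ).mul hσ)
    rw [zero_mul, sub_zero] at hlim
    refine hlim.congr' ?_
    filter_upwards [hδne] with x hx
    field_simp
    ring
  have hnum := hσ1.mul (tendsto_const_nhds (x := a) |>.sub hη)
  have hden := hσ.add (hσ1.mul (tendsto_const_nhds (x := a)))
  rw [one_mul, sub_zero] at hnum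
  rw [one_mul] at hden
  refine (hnum.div hden ha).congr' ?_
  filter_upwards [hδne] with x hx
  rw [Pi.div_apply]
  field_simp
  ring

/-- Theorem 5.3: with `r(t) = -ln(λ(t)ε²) - ρ`, the probability of the first branching
time being at most `t - r(t)` converges to `1/(e^{-ρ}+1)`. -/
theorem stmt10 (ε : ℝ) (hε : 0 < ε) (lam : ℝ → ℝ) (hpos : ∀ t > (0 : ℝ), 0 < lam t)
    (h0 : Filter.Tendsto lam Filter.atTop (nhds 0))
    (h1 : Filter.Tendsto (fun t => t + Real.log (lam t * ε ^ 2)) Filter.atTop Filter.atTop)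
    (σ : ℝ → ℝ) (hσ : ∀ t, σ t = 1 / Real.cosh (ε * Real.sqrt (2 * lam t)))
    (ρ : ℝ) (r : ℝ → ℝ) (hr : ∀ t, r t = -Real.log (lam t * ε ^ 2) - ρ) :
    Filter.Tendsto
      (fun t => σ t * (Real.exp (-r t) - Real.exp (-t)) /
        (1 - σ t * (1 - Real.exp (-r t))))
      Filter.atTop (nhds (1 / (Real.exp (-ρ) + 1))) := by
  set δ : ℝ → ℝ := fun t => lam t * ε ^ 2
  have hδpos : ∀ᶠ t in atTop, 0 < δ t :=
    (eventually_gt_atTop 0).mono fun t ht => mul_pos (hpos t ht) (by positivity)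
  have hδ : Tendsto δ atTop (𝓝[>] 0) :=
    tendsto_nhdsWithin_iff.mpr ⟨by simpa using h0.mul_const (ε ^ 2), hδpos⟩
  have hσδ : σ = fun t => (cosh √(2 * δ t))⁻¹ := by
    funext t
    rw [hσ, one_div, ← mul_assoc, sqrt_mul' _ (sq_nonneg ε), sqrt_sq hε.le, mul_comm]
  have hsech : Tendsto (fun t => (1 - σ t) / δ t) atTop (𝓝 1) :=
    hσδ ▸ tendsto_one_sub_inv_cosh_sqrt_two_mul_div.comp hδ
  have hη : Tendsto (fun t => exp (-t) / δ t) atTop (𝓝 0) := by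
    refine (tendsto_exp_atBot.comp (tendsto_neg_atBot_iff.mpr h1)).congr' ?_
    filter_upwards [hδpos] with t ht
    rw [Function.comp_apply, neg_add, exp_add, exp_neg (log _), exp_log ht, div_eq_mul_inv]
  have hexp_r : ∀ᶠ t in atTop, exp (-r t) = δ t * exp ρ := by
    filter_upwards [hδpos] with t ht
    rw [hr, neg_sub, sub_neg_eq_add, add_comm, exp_add, exp_log ht]
  have hlimit : exp ρ / (1 + exp ρ) = 1 / (exp (-ρ) + 1) := by
    rw [exp_neg]
    field_simp
  rw [← hlimit]
  refine (tendsto_mul_sub_div_one_sub_mul (by positivity) (hδ.mono_right (nhdsGT_le_nhdsNE 0))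
    hsech hη).congr' ?_
  filter_upwards [hexp_r] with t ht
  rw [ht]
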